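/- arXiv:2302.07859 — 2 statements merged into one kernel-verified Lean document; each statement's English description precedes it below -/
import Mathlib

section
/- Let w be a clique weighting such that the rescaled weights t_w(r) := (2(r−1)/r)·w(r) satisfy t_w(r) ≤ 1 for all r ≥ 2 (with equality for some r). Then for every n-vertex graph G, w(G) ≤ 1/2, where each edge e is given weight w(r_e) for r_e the order of a largest clique containing e. -/
open Finset
open scoped Classical

/-- The order of a largest clique of `G` containing both `u` and `v`. -/
noncomputable def cliqueOrder {V : Type} [Fintype V] (G : SimpleGraph V) (u v : V) : ℕ :=
  sSup {r : ℕ | ∃ s : Finset V, G.IsNClique r s ∧ u ∈ s ∧ v ∈ s}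

/-- `w(G) = (2/n²)·∑_{e ∈ E(G)} w(r_e)`, written as a sum over ordered pairs of
adjacent vertices (each edge is counted twice), divided by `n²`. -/
noncomputable def cliqueWeight {V : Type} [Fintype V] (G : SimpleGraph V) (w : ℕ → ℝ) : ℝ :=
  ((Fintype.card V : ℝ) ^ 2)⁻¹ *
    ∑ u : V, ∑ v : V, if G.Adj u v then w (cliqueOrder G u v) else 0

/-- The rescaling `t_w(r) = (2(r-1)/r)·w(r)` of a clique weighting `w`. -/
noncomputable def rescaledWeight (w : ℕ → ℝ) (r : ℕ) : ℝ :=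
  2 * ((r : ℝ) - 1) / (r : ℝ) * w r

/-!
A weighting with `t_w ≤ 1` is bounded, at every order `r ≥ 2`, by the critical weighting
`r / (2(r - 1))`, the one with `t_w ≡ 1`, so it suffices to treat the latter. For a vertex set `S`,
take a largest clique `s ⊆ S`, of order `q`. A vertex `u ∈ S` with `d` neighbours in `s` lies with
them in a clique of order `d + 1 ≤ q`, so each of these `d` edges has weight at most
`(d + 1) / (2d)`, and together they weigh at most `(d + 1) / 2 ≤ q / 2`. Counting ordered pairs,
the pairs meeting `s` thus weigh at most `(|S|² - (|S| - q)²) / 2`, and induction on `S \ s` bounds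
the rest by `(|S| - q)² / 2`.
-/

open SimpleGraph

noncomputable def criticalWeight (r : ℕ) : ℝ := r / (2 * ((r : ℝ) - 1))

lemma le_criticalWeight_of_rescaledWeight_le_one {w : ℕ → ℝ} {r : ℕ} (hr : 2 ≤ r)
    (h : rescaledWeight w r ≤ 1) : w r ≤ criticalWeight r := by
  have hr : (2 : ℝ) ≤ r := by exact_mod_cast hr
  rw [rescaledWeight, div_mul_eq_mul_div, div_le_one (by linarith)] at h
  rw [criticalWeight, le_div_iff₀ (by linarith)]
  linarith

lemma criticalWeight_le_of_le {r t : ℕ} (hr : 2 ≤ r) (hrt : r ≤ t) :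
    criticalWeight t ≤ criticalWeight r := by
  have hr : (2 : ℝ) ≤ r := by exact_mod_cast hr
  have hrt : (r : ℝ) ≤ t := by exact_mod_cast hrt
  rw [criticalWeight, criticalWeight, div_le_div_iff₀ (by linarith) (by linarith)]
  nlinarith

lemma natCast_mul_criticalWeight_succ_le (d : ℕ) : d * criticalWeight (d + 1) ≤ (d + 1) / 2 := by
  rcases Nat.eq_zero_or_pos d with rfl | hd
  · norm_num
  · have hd : (0 : ℝ) < d := by exact_mod_cast hd
    refine le_of_eq ?_
    rw [criticalWeight]
    push_cast
    rw [add_sub_cancel_right]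
    field_simp

section clique

variable {V : Type*} {G : SimpleGraph V}

lemma isNClique_insert_filter_adj {s : Finset V} (hs : G.IsClique (s : Set V)) (u : V) :
    G.IsNClique (#{v ∈ s | G.Adj u v} + 1) (insert u {v ∈ s | G.Adj u v}) :=
  IsNClique.insert ⟨hs.subset (coe_subset.mpr (filter_subset _ s)), rfl⟩
    fun _ hv => (mem_filter.mp hv).2

lemma exists_max_card_isClique_subset (G : SimpleGraph V) (S : Finset V) :
    ∃ s ⊆ S, G.IsClique (s : Set V) ∧ ∀ t ⊆ S, G.IsClique (t : Set V) → #t ≤ #s := by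
  obtain ⟨s, hs, hmax⟩ := Finset.exists_max_image
    (S.powerset.filter fun t : Finset V => G.IsClique (t : Set V)) card ⟨∅, by simp⟩
  simp only [mem_filter, mem_powerset] at hs hmax
  exact ⟨s, hs.1, hs.2, fun t htS ht => hmax t ⟨htS, ht⟩⟩

end clique

section cliqueOrder

variable {V : Type} [Fintype V] {G : SimpleGraph V}

lemma bddAbove_cliqueOrder_set (G : SimpleGraph V) (u v : V) :
    BddAbove {r : ℕ | ∃ s : Finset V, G.IsNClique r s ∧ u ∈ s ∧ v ∈ s} :=
  ⟨Fintype.card V, fun _ ⟨s, hs, _⟩ => hs.card_eq ▸ card_le_univ s⟩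

lemma le_cliqueOrder {u v : V} {r : ℕ} {s : Finset V} (hs : G.IsNClique r s) (hu : u ∈ s)
    (hv : v ∈ s) : r ≤ cliqueOrder G u v :=
  le_csSup (bddAbove_cliqueOrder_set G u v) ⟨s, hs, hu, hv⟩

lemma two_le_cliqueOrder {u v : V} (h : G.Adj u v) : 2 ≤ cliqueOrder G u v :=
  le_cliqueOrder (s := {u, v})
    ⟨by rw [coe_pair]; exact isClique_pair.mpr fun _ => h, card_pair h.ne⟩ (by simp) (by simp)

lemma cliqueOrder_comm (G : SimpleGraph V) (u v : V) : cliqueOrder G u v = cliqueOrder G v u := by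
  simp only [cliqueOrder, and_comm (a := u ∈ _)]

end cliqueOrder

noncomputable def cliqueEdgeWeight {V : Type} [Fintype V] (G : SimpleGraph V) (f : ℕ → ℝ)
    (u v : V) : ℝ :=
  if G.Adj u v then f (cliqueOrder G u v) else 0

section cliqueEdgeWeight

variable {V : Type} [Fintype V] {G : SimpleGraph V}

lemma cliqueEdgeWeight_comm (G : SimpleGraph V) (f : ℕ → ℝ) (u v : V) :
    cliqueEdgeWeight G f u v = cliqueEdgeWeight G f v u := by
  simp only [cliqueEdgeWeight, G.adj_comm u v, cliqueOrder_comm G u v]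

lemma cliqueEdgeWeight_le_cliqueEdgeWeight {f g : ℕ → ℝ} (hfg : ∀ r, 2 ≤ r → f r ≤ g r)
    (u v : V) : cliqueEdgeWeight G f u v ≤ cliqueEdgeWeight G g u v := by
  unfold cliqueEdgeWeight
  split_ifs with h
  · exact hfg _ (two_le_cliqueOrder h)
  · rfl

lemma sum_cliqueEdgeWeight_criticalWeight_le {s : Finset V} (hs : G.IsClique (s : Set V))
    (u : V) :
    ∑ v ∈ s, cliqueEdgeWeight G criticalWeight u v ≤ (#{v ∈ s | G.Adj u v} + 1) / 2 := by
  set t := {v ∈ s | G.Adj u v}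
  have ht := isNClique_insert_filter_adj hs u
  calc ∑ v ∈ s, cliqueEdgeWeight G criticalWeight u v
      = ∑ v ∈ t, criticalWeight (cliqueOrder G u v) := by
        rw [sum_filter]; rfl
    _ ≤ ∑ _v ∈ t, criticalWeight (#t + 1) := by
        refine sum_le_sum fun v hv => criticalWeight_le_of_le ?_ ?_
        · have := card_pos.mpr ⟨v, hv⟩
          omega
        · exact le_cliqueOrder ht (mem_insert_self u t) (mem_insert_of_mem hv)
    _ ≤ (#t + 1) / 2 := by
        simpa using natCast_mul_criticalWeight_succ_le #t

lemma sum_cliqueEdgeWeight_criticalWeight_le_of_max {S s : Finset V} (hsS : s ⊆ S)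
    (hs : G.IsClique (s : Set V)) (hmax : ∀ t ⊆ S, G.IsClique (t : Set V) → #t ≤ #s)
    {u : V} (hu : u ∈ S) : ∑ v ∈ s, cliqueEdgeWeight G criticalWeight u v ≤ #s / 2 := by
  have hcard := (isNClique_insert_filter_adj hs u).card_eq ▸ hmax _
    (insert_subset hu ((filter_subset _ s).trans hsS)) (isNClique_insert_filter_adj hs u).isClique
  refine (sum_cliqueEdgeWeight_criticalWeight_le hs u).trans ?_
  gcongr
  exact_mod_cast hcard

theorem sum_sum_cliqueEdgeWeight_criticalWeight_le (G : SimpleGraph V) (S : Finset V) :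
    ∑ u ∈ S, ∑ v ∈ S, cliqueEdgeWeight G criticalWeight u v ≤ (#S : ℝ) ^ 2 / 2 := by
  induction S using Finset.strongInduction with
  | H S ih =>
  rcases S.eq_empty_or_nonempty with rfl | ⟨x, hx⟩
  · simp
  obtain ⟨s, hsS, hs, hmax⟩ := exists_max_card_isClique_subset G S
  have hs_pos : 0 < #s := hmax {x} (by simpa) (by simp)
  set g := cliqueEdgeWeight G criticalWeight
  have hrows : ∀ u ∈ S, ∑ v ∈ s, g u v ≤ #s / 2 :=
    fun u hu => sum_cliqueEdgeWeight_criticalWeight_le_of_max hsS hs hmax hu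
  have hmeet : ∑ u ∈ S, ∑ v ∈ s, g u v ≤ #S * (#s / 2) := by
    simpa using sum_le_card_nsmul _ _ _ hrows
  have hcross : ∑ u ∈ s, ∑ v ∈ S \ s, g u v ≤ #(S \ s) * (#s / 2) := by
    rw [sum_comm]
    simp_rw [g, cliqueEdgeWeight_comm G criticalWeight _ (_ : V)]
    simpa using sum_le_card_nsmul _ _ _ fun u hu => hrows u (sdiff_subset hu)
  have hrest := ih (S \ s) (sdiff_ssubset hsS (card_pos.mp hs_pos))
  have hcard : (#(S \ s) : ℝ) = #S - #s := by
    rw [card_sdiff_of_subset hsS, Nat.cast_sub (card_le_card hsS)]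
  have hrow_split : ∀ u, ∑ v ∈ S, g u v = ∑ v ∈ s, g u v + ∑ v ∈ S \ s, g u v :=
    fun u => by rw [add_comm, sum_sdiff hsS]
  rw [sum_congr rfl fun u _ => hrow_split u, sum_add_distrib,
    ← sum_sdiff hsS (f := fun u => ∑ v ∈ S \ s, g u v)]
  rw [hcard] at hcross hrest
  linarith

lemma cliqueWeight_le_cliqueWeight (G : SimpleGraph V) {f g : ℕ → ℝ}
    (hfg : ∀ r, 2 ≤ r → f r ≤ g r) : cliqueWeight G f ≤ cliqueWeight G g := by
  unfold cliqueWeight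
  gcongr with u _ v _
  exact cliqueEdgeWeight_le_cliqueEdgeWeight hfg u v

theorem cliqueWeight_criticalWeight_le_half (G : SimpleGraph V) :
    cliqueWeight G criticalWeight ≤ 1 / 2 := by
  have hsum := sum_sum_cliqueEdgeWeight_criticalWeight_le G univ
  rw [card_univ] at hsum
  calc cliqueWeight G criticalWeight
      ≤ ((Fintype.card V : ℝ) ^ 2)⁻¹ * ((Fintype.card V : ℝ) ^ 2 / 2) := by
        unfold cliqueWeight
        gcongr
        exact hsum
    _ ≤ 1 / 2 := by
        rcases eq_or_ne (Fintype.card V : ℝ) 0 with h | h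
        · simp [h]
        · exact le_of_eq (by field_simp)

end cliqueEdgeWeight

theorem cliqueWeight_le_half_of_rescaled_le_one_general (w : ℕ → ℝ)
    (hle : ∀ r, 2 ≤ r → rescaledWeight w r ≤ 1)
    (n : ℕ) (G : SimpleGraph (Fin n)) :
    cliqueWeight G w ≤ 1 / 2 :=
  (cliqueWeight_le_cliqueWeight G fun r hr => le_criticalWeight_of_rescaledWeight_le_one hr
    (hle r hr)).trans (cliqueWeight_criticalWeight_le_half G)

/-- If `w` is a clique weighting whose rescaled weights satisfy `t_w(r) ≤ 1` for all
`r ≥ 2`, with equality for some `r`, then `w(G) ≤ 1/2` for every graph `G`. -/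
theorem cliqueWeight_le_half_of_rescaled_le_one (w : ℕ → ℝ)
    (hw : ∀ r, 2 ≤ r → 0 ≤ w r ∧ w r ≤ 1)
    (hle : ∀ r, 2 ≤ r → rescaledWeight w r ≤ 1)
    (heq : ∃ r, 2 ≤ r ∧ rescaledWeight w r = 1)
    (n : ℕ) (G : SimpleGraph (Fin n)) :
    cliqueWeight G w ≤ 1 / 2 :=
  cliqueWeight_le_half_of_rescaled_le_one_general w hle n G
end

section
/- Let 2 ≤ q ≤ r be integers and 0 ≤ a ≤ 1. Let f : {pairs of [q]} → [0,1] be defined by f(12) = a and f(ij) = 0 for all other pairs, and let F = {(q,f), K_{r+1}^0} (so F-free weighted graphs are K_{r+1}-free graphs in which no q-clique has an edge of weight greater than a). Then d(F) = max{ 1 − 1/(q−1), a·(1 − 1/r) }. -/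
open Finset
open scoped Classical

/-- A weighted clique `(r, f)`: a size `r` together with weights on its pairs. -/
structure WeightedClique where
  r : ℕ
  f : Fin r → Fin r → ℝ

/-- `K_r^a`: the weighted clique of size `r` with all weights equal to `a`. -/
def constWeightedClique (r : ℕ) (a : ℝ) : WeightedClique := ⟨r, fun _ _ => a⟩

/-- An edge-weighted graph `(G, w)` contains the weighted clique `C`. -/
def ContainsWC {n : ℕ} (G : SimpleGraph (Fin n)) (w : Fin n → Fin n → ℝ)
    (C : WeightedClique) : Prop :=
  ∃ φ : Fin C.r → Fin n, Function.Injective φ ∧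
    ∀ i j : Fin C.r, i < j → G.Adj (φ i) (φ j) ∧ C.f i j < w (φ i) (φ j)

/-- `(G, w)` is `F`-free: it contains no member of `F`. -/
def WCFree {n : ℕ} (G : SimpleGraph (Fin n)) (w : Fin n → Fin n → ℝ)
    (F : Set WeightedClique) : Prop :=
  ∀ C ∈ F, ¬ ContainsWC G w C

/-- `w(G) = (2/n²)·∑_{e ∈ E(G)} w(e)`, written as a sum over ordered pairs of
adjacent vertices (each edge counted twice), divided by `n²`. -/
noncomputable def wSum {n : ℕ} (G : SimpleGraph (Fin n)) (w : Fin n → Fin n → ℝ) : ℝ :=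
  ((n : ℝ) ^ 2)⁻¹ * ∑ u : Fin n, ∑ v : Fin n, if G.Adj u v then w u v else 0

/-- `β_n(F)`: the supremum of `w(G)` over all `F`-free edge-weighted graphs on
`n` vertices, with edge weights in `[0,1]`. -/
noncomputable def betaWC (F : Set WeightedClique) (n : ℕ) : ℝ :=
  sSup { x : ℝ | ∃ (G : SimpleGraph (Fin n)) (w : Fin n → Fin n → ℝ),
    (∀ u v, w u v = w v u) ∧
    (∀ u v, G.Adj u v → w u v ∈ Set.Icc (0 : ℝ) 1) ∧
    WCFree G w F ∧ x = wSum G w }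

/-- The weighted clique `(q, f)` with `f(12) = a` and `f ≡ 0` on all other pairs
(0-indexed: the pair `{0,1}` gets weight `a`). -/
def chubbyWC (q : ℕ) (a : ℝ) : WeightedClique :=
  ⟨q, fun i j => if (i.val = 0 ∧ j.val = 1) ∨ (i.val = 1 ∧ j.val = 0) then a else 0⟩

/-!
Lower bound: the Turán graph `T(n, q - 1)` with all weights `1` and the Turán graph `T(n, r)`
with all weights `a` are `F`-free.

Upper bound: drop the edges of weight `0`; what remains is `K_{r+1}`-free and every edge of one of
its `q`-cliques has weight at most `a`. Remove a maximum clique `S` from a vertex set `A`. Each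
vertex `v` of `A` has fewer than `|S|` neighbours in `S`, and they span a clique together with `v`.
If there are at least `q - 1` of them, all edges from `v` into `S` lie in `q`-cliques and weigh at
most `a`, in total at most `a (|S| - 1) ≤ a (1 - 1/r) |S|`; otherwise there are at most
`min (|S| - 1, q - 2) ≤ (1 - 1/(q-1)) |S|` of them. So the weight between `S` and `A` is at most
`d |A| |S|` with `d = max (1 - 1/(q-1)) (a (1 - 1/r))`, and induction on `A \ S` bounds the
weight inside `A` by `d |A|²`.
-/

noncomputable def chubbyDensity (q r : ℕ) (a : ℝ) : ℝ :=
  max (1 - 1 / ((q : ℝ) - 1)) (a * (1 - 1 / (r : ℝ)))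

lemma chubbyDensity_nonneg {q r : ℕ} (hq : 2 ≤ q) (a : ℝ) : 0 ≤ chubbyDensity q r a := by
  have : (1 : ℝ) ≤ (q : ℝ) - 1 := by
    have : (2 : ℝ) ≤ q := by exact_mod_cast hq
    linarith
  exact le_max_of_le_left (sub_nonneg.mpr (div_le_one_of_le₀ this (by linarith)))

/-- `d ≤ min (s - 1) (k - 1) ≤ (1 - 1/k) s`. -/
lemma cast_le_one_sub_inv_mul {d s k : ℕ} (hds : d < s) (hdk : d < k) :
    (d : ℝ) ≤ (1 - 1 / (k : ℝ)) * s := by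
  have hk : (0 : ℝ) < k := by exact_mod_cast (Nat.zero_le d).trans_lt hdk
  have hds' : (d : ℝ) + 1 ≤ s := by exact_mod_cast hds
  have hdk' : (d : ℝ) + 1 ≤ k := by exact_mod_cast hdk
  rw [one_sub_div hk.ne', div_mul_eq_mul_div, le_div_iff₀ hk]
  nlinarith [mul_nonneg (sub_nonneg.mpr hds') (sub_nonneg.mpr hdk')]

namespace SimpleGraph

variable {V : Type*} {H : SimpleGraph V}

lemma IsClique.card_le_of_cliqueFree {r : ℕ} (hfree : H.CliqueFree (r + 1)) {S : Finset V}
    (hS : H.IsClique (S : Set V)) : #S ≤ r := by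
  by_contra! h
  obtain ⟨T, hTS, hT⟩ := exists_subset_card_eq (Nat.succ_le_of_lt h)
  exact hfree T ⟨hS.subset (by exact_mod_cast hTS), hT⟩

lemma exists_isClique_maximal_subset {A : Finset V} (hA : A.Nonempty) :
    ∃ S ⊆ A, S.Nonempty ∧ H.IsClique (S : Set V) ∧
      ∀ T ⊆ A, H.IsClique (T : Set V) → #T ≤ #S := by
  obtain ⟨v, hv⟩ := hA
  have hne : (A.powerset.filter fun S : Finset V => H.IsClique (S : Set V)).Nonempty :=
    ⟨{v}, by simp [hv]⟩
  obtain ⟨S, hS, hmax⟩ := exists_max_image _ card hne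
  rw [mem_filter, mem_powerset] at hS
  refine ⟨S, hS.1, ?_, hS.2, fun T hTA hT => hmax T (by simp [hTA, hT])⟩
  exact card_pos.mp ((hmax {v} (by simp [hv])).trans_lt' (by simp))

variable {W : V → V → ℝ} {q r : ℕ} {a : ℝ}

lemma IsClique.weight_le (hq : 2 ≤ q)
    (hWa : ∀ T : Finset V, H.IsNClique q T → ∀ u ∈ T, ∀ v ∈ T, u ≠ v → W u v ≤ a)
    {T : Finset V} (hT : H.IsClique (T : Set V)) (hqT : q ≤ #T)
    {u v : V} (hu : u ∈ T) (hv : v ∈ T) (huv : u ≠ v) : W u v ≤ a := by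
  obtain ⟨Q, hQ, hQT, hQq⟩ := exists_subsuperset_card_eq (s := {u, v})
    (by simp [insert_subset_iff, hu, hv]) (card_le_two.trans hq) hqT
  exact hWa Q ⟨hT.subset (by exact_mod_cast hQT), hQq⟩ u (hQ (by simp)) v (hQ (by simp)) huv

variable (hq : 2 ≤ q) (ha : 0 ≤ a) (hW1 : ∀ u v, W u v ≤ 1)
  (hWa : ∀ T : Finset V, H.IsNClique q T → ∀ u ∈ T, ∀ v ∈ T, u ≠ v → W u v ≤ a)
include hq ha hW1 hWa

lemma sum_le_chubbyDensity_of_isClique_insert {v : V} {N : Finset V} {s : ℕ}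
    (hvN : v ∉ N) (hN : H.IsClique (insert v N : Set V)) (hNs : #N < s) (hsr : s ≤ r) :
    ∑ u ∈ N, W v u ≤ chubbyDensity q r a * s := by
  have hs : (0 : ℝ) ≤ s := s.cast_nonneg
  by_cases hqN : q ≤ #N + 1
  · have hcl : H.IsClique ((insert v N : Finset V) : Set V) := by rwa [coe_insert]
    calc ∑ u ∈ N, W v u ≤ #N • a := sum_le_card_nsmul _ _ _ fun u hu =>
          hcl.weight_le hq hWa (by rwa [card_insert_of_notMem hvN]) (mem_insert_self v N)
            (mem_insert_of_mem hu) (ne_of_mem_of_not_mem hu hvN).symm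
      _ = a * #N := by rw [nsmul_eq_mul, mul_comm]
      _ ≤ a * ((1 - 1 / (r : ℝ)) * s) :=
          mul_le_mul_of_nonneg_left (cast_le_one_sub_inv_mul hNs (hNs.trans_le hsr)) ha
      _ ≤ chubbyDensity q r a * s := by
          rw [← mul_assoc]; exact mul_le_mul_of_nonneg_right (le_max_right _ _) hs
  · have hNq : #N < q - 1 := by omega
    calc ∑ u ∈ N, W v u ≤ #N • (1 : ℝ) := sum_le_card_nsmul _ _ _ fun u _ => hW1 v u
      _ = #N := by simp
      _ ≤ (1 - 1 / ((q - 1 : ℕ) : ℝ)) * s := cast_le_one_sub_inv_mul hNs hNq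
      _ ≤ chubbyDensity q r a * s := by
          rw [Nat.cast_sub (by omega), Nat.cast_one]
          exact mul_le_mul_of_nonneg_right (le_max_left _ _) hs

variable (hfree : H.CliqueFree (r + 1)) (hW0 : ∀ u v, ¬ H.Adj u v → W u v ≤ 0)
include hfree hW0

lemma sum_le_chubbyDensity_of_maximal {A S : Finset V} (hSA : S ⊆ A)
    (hS : H.IsClique (S : Set V)) (hmax : ∀ T ⊆ A, H.IsClique (T : Set V) → #T ≤ #S)
    {v : V} (hv : v ∈ A) :
    ∑ u ∈ S, W v u ≤ chubbyDensity q r a * #S := by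
  set N := S.filter (H.Adj v)
  have hvN : v ∉ N := fun h => H.loopless.irrefl v (mem_filter.mp h).2
  have hN : H.IsClique (insert v N : Set V) :=
    (hS.subset (coe_subset.mpr (filter_subset _ _))).insert fun u hu _ => (mem_filter.mp hu).2
  have hNs : #N < #S := by
    have := hmax (insert v N) (insert_subset hv ((filter_subset _ _).trans hSA))
      (by rwa [coe_insert])
    rwa [card_insert_of_notMem hvN, Nat.succ_le_iff] at this
  calc ∑ u ∈ S, W v u
      = ∑ u ∈ N, W v u + ∑ u ∈ S.filter (¬ H.Adj v ·), W v u :=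
        (sum_filter_add_sum_filter_not S (H.Adj v) _).symm
    _ ≤ ∑ u ∈ N, W v u + 0 := by
        gcongr; exact sum_nonpos fun u hu => hW0 v u (mem_filter.mp hu).2
    _ ≤ chubbyDensity q r a * #S := by
        rw [add_zero]
        exact sum_le_chubbyDensity_of_isClique_insert hq ha hW1 hWa hvN hN hNs
          (hS.card_le_of_cliqueFree hfree)

theorem sum_sum_le_chubbyDensity (hsymm : ∀ u v, W u v = W v u) (A : Finset V) :
    ∑ u ∈ A, ∑ v ∈ A, W u v ≤ chubbyDensity q r a * #A ^ 2 := by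
  induction A using Finset.strongInduction with
  | _ A ih =>
  rcases A.eq_empty_or_nonempty with rfl | hA
  · simp
  obtain ⟨S, hSA, hSne, hS, hmax⟩ := exists_isClique_maximal_subset (H := H) hA
  set M := chubbyDensity q r a
  set B := A \ S
  have hrow : ∀ v ∈ A, ∑ u ∈ S, W v u ≤ M * #S := fun v hv =>
    sum_le_chubbyDensity_of_maximal hq ha hW1 hWa hfree hW0 hSA hS hmax hv
  have hsplit (g : V → ℝ) : ∑ x ∈ A, g x = ∑ x ∈ B, g x + ∑ x ∈ S, g x := (sum_sdiff hSA).symm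
  have hcard : (#A : ℝ) = #B + #S := by exact_mod_cast (card_sdiff_add_card_eq_card hSA).symm
  calc ∑ u ∈ A, ∑ v ∈ A, W u v
      = ∑ u ∈ B, ∑ v ∈ B, W u v + ∑ u ∈ B, ∑ v ∈ S, W u v + ∑ u ∈ A, ∑ v ∈ S, W u v := by
        have hswap : ∑ u ∈ S, ∑ v ∈ B, W u v = ∑ u ∈ B, ∑ v ∈ S, W u v := by
          rw [sum_comm]; simp_rw [hsymm]
        simp_rw [hsplit fun v => W _ v, sum_add_distrib, hsplit fun u => ∑ v ∈ B, W u v, hswap]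
    _ ≤ M * #B ^ 2 + #B • (M * #S) + #A • (M * #S) := by
        gcongr
        · exact ih B (sdiff_ssubset hSA hSne)
        · exact sum_le_card_nsmul _ _ _ fun u hu => hrow u (sdiff_subset hu)
        · exact sum_le_card_nsmul _ _ _ hrow
    _ = M * #A ^ 2 := by simp only [nsmul_eq_mul, hcard]; ring

end SimpleGraph

def posGraph {V : Type*} (G : SimpleGraph V) (w : V → V → ℝ) (hw : ∀ u v, w u v = w v u) :
    SimpleGraph V where
  Adj u v := G.Adj u v ∧ 0 < w u v
  symm := ⟨fun u v h => ⟨h.1.symm, hw u v ▸ h.2⟩⟩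
  loopless := ⟨fun _ h => h.1.ne rfl⟩

section WeightedGraph

variable {n : ℕ} {G : SimpleGraph (Fin n)} {w : Fin n → Fin n → ℝ}

lemma containsWC_chubbyWC {q : ℕ} (hq : 2 ≤ q) {a : ℝ} {T : Finset (Fin n)} (hT : #T = q)
    (hTpos : ∀ ⦃x⦄, x ∈ T → ∀ ⦃y⦄, y ∈ T → x ≠ y → G.Adj x y ∧ 0 < w x y)
    {u v : Fin n} (hu : u ∈ T) (hv : v ∈ T) (huv : u ≠ v) (hwuv : a < w u v) :
    ContainsWC G w (chubbyWC q a) := by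
  obtain ⟨q, rfl⟩ : ∃ q', q = q' + 2 := ⟨q - 2, by omega⟩
  set R := (T.erase u).erase v
  have hR : #R = q := by
    rw [card_erase_of_mem (mem_erase.mpr ⟨huv.symm, hv⟩), card_erase_of_mem hu, hT]; rfl
  set g : Fin q → Fin n := fun i => (R.equivFinOfCardEq hR).symm i
  have hgR (i : Fin q) : g i ∈ R := ((R.equivFinOfCardEq hR).symm i).2
  set φ : Fin (q + 2) → Fin n := Fin.cons u (Fin.cons v g)
  have hφT : ∀ i, φ i ∈ T := by
    refine Fin.cases hu (Fin.cases hv fun i => ?_)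
    exact mem_of_mem_erase (mem_of_mem_erase (hgR i))
  have hφ : Function.Injective φ := by
    refine Fin.cons_injective_iff.mpr ⟨?_, Fin.cons_injective_iff.mpr ⟨?_, ?_⟩⟩
    · rintro ⟨i, hi⟩
      cases i using Fin.cases with
      | zero => exact huv hi.symm
      | succ i => exact ne_of_mem_erase (mem_of_mem_erase (hgR i)) hi
    · rintro ⟨i, hi⟩; exact ne_of_mem_erase (hgR i) hi
    · exact fun i j h => (R.equivFinOfCardEq hR).symm.injective (Subtype.ext h)
  show ∃ φ : Fin (q + 2) → Fin n, Function.Injective φ ∧ ∀ i j, i < j → G.Adj (φ i) (φ j) ∧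
    (if (i.val = 0 ∧ j.val = 1) ∨ (i.val = 1 ∧ j.val = 0) then a else 0) < w (φ i) (φ j)
  refine ⟨φ, hφ, fun i j hij => ?_⟩
  obtain ⟨hadj, hpos⟩ := hTpos (hφT i) (hφT j) (hφ.ne hij.ne)
  refine ⟨hadj, ?_⟩
  split_ifs with h
  · obtain ⟨hi, hj⟩ : i.val = 0 ∧ j.val = 1 := by omega
    obtain rfl : i = 0 := Fin.ext hi
    obtain rfl : j = 1 := Fin.ext (hj.trans (Fin.val_one q).symm)
    exact hwuv
  · exact hpos

lemma not_containsWC_of_cliqueFree {C : WeightedClique} (h : G.CliqueFree C.r) :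
    ¬ ContainsWC G w C := by
  rintro ⟨φ, hφ, hadj⟩
  have hφadj {i j : Fin C.r} (hij : i ≠ j) : G.Adj (φ i) (φ j) := by
    rcases hij.lt_or_gt with hij | hij
    · exact (hadj i j hij).1
    · exact (hadj j i hij).1.symm
  let e : (⊤ : SimpleGraph (Fin C.r)) ↪g G :=
    ⟨⟨φ, hφ⟩, fun {i j} => ⟨fun h hij => h.ne (congrArg φ hij), hφadj⟩⟩
  exact (SimpleGraph.not_cliqueFree_iff_top_isContained _).mpr e.isContained h

lemma not_containsWC_chubbyWC_const {q : ℕ} (hq : 2 ≤ q) (a : ℝ) :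
    ¬ ContainsWC G (fun _ _ => a) (chubbyWC q a) := by
  rintro ⟨φ, -, hadj⟩
  have := (hadj ⟨0, by change 0 < q; omega⟩ ⟨1, by change 1 < q; omega⟩ (by simp)).2
  simp [chubbyWC] at this

lemma cliqueFree_posGraph (hw : ∀ u v, w u v = w v u) {k : ℕ}
    (h : ¬ ContainsWC G w (constWeightedClique k 0)) : (posGraph G w hw).CliqueFree k := by
  by_contra hk
  let e := SimpleGraph.topEmbeddingOfNotCliqueFree hk
  refine h ⟨e, e.injective, fun i j hij => ?_⟩
  obtain ⟨hadj, hpos⟩ : (posGraph G w hw).Adj (e i) (e j) := e.map_adj_iff.mpr hij.ne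
  exact ⟨hadj, hpos⟩

lemma wSum_le_chubbyDensity {q r : ℕ} {a : ℝ} (hq : 2 ≤ q) (ha : 0 ≤ a)
    (hsym : ∀ u v, w u v = w v u) (hw : ∀ u v, G.Adj u v → w u v ∈ Set.Icc (0 : ℝ) 1)
    (hfree : WCFree G w {chubbyWC q a, constWeightedClique (r + 1) 0}) :
    wSum G w ≤ chubbyDensity q r a := by
  set H := posGraph G w hsym
  set W : Fin n → Fin n → ℝ := fun u v => if G.Adj u v then w u v else 0
  have hWa (T : Finset (Fin n)) (hT : H.IsNClique q T) (u : Fin n) (hu : u ∈ T) (v : Fin n)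
      (hv : v ∈ T) (huv : u ≠ v) : W u v ≤ a := by
    by_contra! hlt
    refine hfree _ (Set.mem_insert _ _) (containsWC_chubbyWC hq hT.2 hT.1 hu hv huv ?_)
    simpa [W, (hT.1 hu hv huv).1] using hlt
  have hsum := SimpleGraph.sum_sum_le_chubbyDensity (H := H) (W := W) hq ha
    (fun u v => by unfold W; split_ifs with h; exacts [(hw u v h).2, zero_le_one])
    hWa (cliqueFree_posGraph hsym (hfree _ (Set.mem_insert_of_mem _ rfl)))
    (fun u v huv => by
      unfold W; split_ifs with h; exacts [not_lt.mp fun hp => huv ⟨h, hp⟩, le_rfl])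
    (fun u v => by simp only [W, G.adj_comm u v, hsym u v]) univ
  rcases eq_or_ne n 0 with rfl | hn
  · simpa [wSum] using chubbyDensity_nonneg hq a
  rw [card_univ, Fintype.card_fin] at hsum
  rw [wSum, inv_mul_le_iff₀ (by positivity), mul_comm]
  exact hsum

end WeightedGraph

lemma card_filter_val_mod_eq_le (n k c : ℕ) : #{v : Fin n | (v : ℕ) % k = c} ≤ n / k + 1 := by
  calc #{v : Fin n | (v : ℕ) % k = c} ≤ #(range (n / k + 1)) := by
        refine card_le_card_of_injOn (fun v => (v : ℕ) / k)
          (fun v _ => mem_range.mpr (Nat.lt_succ_of_le (Nat.div_le_div_right v.2.le)))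
          (fun x hx y hy hxy => Fin.ext ?_)
        simp only [coe_filter, mem_univ, true_and, Set.mem_ofPred_eq] at hx hy
        rw [← Nat.div_add_mod x k, ← Nat.div_add_mod y k, hx, hy]
        exact congrArg (k * · + c) hxy
    _ = n / k + 1 := card_range _

lemma le_wSum_turanGraph_const {n : ℕ} (hn : 0 < n) (k : ℕ) {c : ℝ} (hc : 0 ≤ c) :
    c * (1 - 1 / k - 1 / n) ≤ wSum (SimpleGraph.turanGraph n k) (fun _ _ => c) := by
  have hrow (u : Fin n) : c * (n - (n / k + 1)) ≤
      ∑ v, if (SimpleGraph.turanGraph n k).Adj u v then c else 0 := by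
    have hcard : (#{v : Fin n | (v : ℕ) % k = u % k} : ℝ) ≤ n / k + 1 :=
      (Nat.cast_le.mpr (card_filter_val_mod_eq_le n k _)).trans (by
        push_cast; gcongr; exact Nat.cast_div_le)
    calc c * (n - (n / k + 1)) ≤ c * (n - #{v : Fin n | (v : ℕ) % k = u % k}) := by gcongr
      _ = ∑ v : Fin n, (c - if (v : ℕ) % k = u % k then c else 0) := by
        rw [sum_sub_distrib, ← sum_filter]
        simp only [sum_const, card_univ, Fintype.card_fin, nsmul_eq_mul]
        ring
      _ = ∑ v, if (SimpleGraph.turanGraph n k).Adj u v then c else 0 := by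
        refine sum_congr rfl fun v _ => ?_
        by_cases h : (v : ℕ) % k = u % k
        · rw [if_pos h, if_neg (by rw [SimpleGraph.turanGraph_adj]; exact not_not.mpr h.symm)]
          ring
        · rw [if_neg h, if_pos (by rw [SimpleGraph.turanGraph_adj]; exact Ne.symm h)]
          ring
  have hn' : (0 : ℝ) < n := by exact_mod_cast hn
  calc c * (1 - 1 / k - 1 / n) = ((n : ℝ) ^ 2)⁻¹ * (n * (c * (n - (n / k + 1)))) := by
        field_simp; ring
    _ ≤ wSum (SimpleGraph.turanGraph n k) (fun _ _ => c) := by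
        rw [wSum]; gcongr
        convert sum_le_sum fun u (_ : u ∈ univ) => hrow u using 1
        · simp
        · -- the two sums differ only in the `Decidable` instances of their `if`s
          congr! 4

section Beta

variable {F : Set WeightedClique} {n : ℕ} {B : ℝ}
  (hB : ∀ (G : SimpleGraph (Fin n)) (w : Fin n → Fin n → ℝ), (∀ u v, w u v = w v u) →
    (∀ u v, G.Adj u v → w u v ∈ Set.Icc (0 : ℝ) 1) → WCFree G w F → wSum G w ≤ B)
include hB

lemma betaWC_le (hB0 : 0 ≤ B) : betaWC F n ≤ B :=
  Real.sSup_le (by rintro x ⟨G, w, hsym, hw, hfree, rfl⟩; exact hB G w hsym hw hfree) hB0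

lemma wSum_le_betaWC (G : SimpleGraph (Fin n)) (w : Fin n → Fin n → ℝ)
    (hsym : ∀ u v, w u v = w v u) (hw : ∀ u v, G.Adj u v → w u v ∈ Set.Icc (0 : ℝ) 1)
    (hfree : WCFree G w F) : wSum G w ≤ betaWC F n :=
  le_csSup ⟨B, by rintro x ⟨G, w, hsym, hw, hfree, rfl⟩; exact hB G w hsym hw hfree⟩
    ⟨G, w, hsym, hw, hfree, rfl⟩

end Beta

section Chubby

variable {q r : ℕ} {a : ℝ} (hq : 2 ≤ q) (ha : 0 ≤ a)
include hq ha

lemma betaWC_chubby_le (n : ℕ) :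
    betaWC {chubbyWC q a, constWeightedClique (r + 1) 0} n ≤ chubbyDensity q r a :=
  betaWC_le (fun _ _ hsym hw hfree => wSum_le_chubbyDensity hq ha hsym hw hfree)
    (chubbyDensity_nonneg hq a)

lemma chubbyDensity_sub_le_betaWC_chubby (hqr : q ≤ r) (ha1 : a ≤ 1) {n : ℕ} (hn : 0 < n) :
    chubbyDensity q r a - 1 / n ≤ betaWC {chubbyWC q a, constWeightedClique (r + 1) 0} n := by
  have hle := wSum_le_betaWC (n := n)
    (fun _ _ hsym hw hfree => wSum_le_chubbyDensity (r := r) hq ha hsym hw hfree)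
  rw [chubbyDensity, ← max_sub_sub_right]
  apply max_le
  · calc 1 - 1 / ((q : ℝ) - 1) - 1 / n = 1 * (1 - 1 / ((q - 1 : ℕ) : ℝ) - 1 / n) := by
          rw [Nat.cast_sub (by omega), Nat.cast_one, one_mul]
      _ ≤ wSum (SimpleGraph.turanGraph n (q - 1)) (fun _ _ => 1) :=
          le_wSum_turanGraph_const hn _ zero_le_one
      _ ≤ _ := by
          have hcf := SimpleGraph.turanGraph_cliqueFree (n := n) (r := q - 1) (by omega)
          rw [Nat.sub_add_cancel (by omega : 1 ≤ q)] at hcf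
          refine hle _ _ (fun _ _ => rfl) (fun _ _ _ => ⟨zero_le_one, le_rfl⟩) ?_
          rintro C (rfl | rfl)
          exacts [not_containsWC_of_cliqueFree hcf,
            not_containsWC_of_cliqueFree (hcf.mono (show q ≤ r + 1 by omega))]
  · calc a * (1 - 1 / (r : ℝ)) - 1 / n ≤ a * (1 - 1 / r - 1 / n) := by
          rw [mul_sub (a := a) (c := 1 / (n : ℝ))]
          gcongr
          exact mul_le_of_le_one_left (by positivity) ha1
      _ ≤ wSum (SimpleGraph.turanGraph n r) (fun _ _ => a) := le_wSum_turanGraph_const hn _ ha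
      _ ≤ _ := by
          refine hle _ _ (fun _ _ => rfl) (fun _ _ _ => ⟨ha, ha1⟩) ?_
          rintro C (rfl | rfl)
          exacts [not_containsWC_chubbyWC_const hq a,
            not_containsWC_of_cliqueFree (SimpleGraph.turanGraph_cliqueFree (by omega))]

end Chubby

/-- For `2 ≤ q ≤ r` and `0 ≤ a ≤ 1`, forbidding `K_{r+1}` and any `q`-clique having
an edge of weight larger than `a`, we get
`d(F) = max{1 - 1/(q-1), a(1 - 1/r)}`. -/
theorem dWC_chubby (q r : ℕ) (hq : 2 ≤ q) (hqr : q ≤ r) (a : ℝ)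
    (ha : 0 ≤ a) (ha1 : a ≤ 1) :
    Filter.Tendsto (betaWC {chubbyWC q a, constWeightedClique (r + 1) 0})
      Filter.atTop
      (nhds (max (1 - 1 / ((q : ℝ) - 1)) (a * (1 - 1 / (r : ℝ))))) := by
  have hlow : Filter.Tendsto (fun n : ℕ => chubbyDensity q r a - 1 / n) Filter.atTop
      (nhds (chubbyDensity q r a)) := by
    simpa using (tendsto_const_nhds (x := chubbyDensity q r a)).sub
      tendsto_one_div_atTop_nhds_zero_nat
  refine tendsto_of_tendsto_of_tendsto_of_le_of_le' hlow tendsto_const_nhds ?_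
    (Filter.Eventually.of_forall (betaWC_chubby_le hq ha))
  filter_upwards [Filter.eventually_gt_atTop 0] with n hn
  exact chubbyDensity_sub_le_betaWC_chubby hq ha hqr ha1 hn
end
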